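/- Let t > 0 and set s = (t,t,t). Then for every a = (a₁,a₂,a₃) ∈ ℝ³ with a_r < a_r⁰(s) = -t/2 for all r, the determinant of M₆(s,a) is negative; in particular, there is no a ∈ ℝ³ with a_r < a_r⁰(s) for all r such that M₆(s,a) is positive definite. (Hence the normal homogeneous metric on W⁶ does not have strongly positive curvature at the level of invariant modified curvature operators.) -/

import Mathlib

open Matrix

/-- `S(s) = 2(s₁s₂+s₁s₃+s₂s₃) - (s₁²+s₂²+s₃²)`. -/
noncomputable def Spoly (s : Fin 3 → ℝ) : ℝ :=
  2 * (s 0 * s 1 + s 0 * s 2 + s 1 * s 2) - (s 0 ^ 2 + s 1 ^ 2 + s 2 ^ 2)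

/-- `p_r(s) = (s_{r+1}-s_{r+2})² + 2 s_r (s_{r+1}+s_{r+2}) - 3 s_r²`, indices mod 3. -/
noncomputable def ppoly (s : Fin 3 → ℝ) (r : Fin 3) : ℝ :=
  (s (r + 1) - s (r + 2)) ^ 2 + 2 * s r * (s (r + 1) + s (r + 2)) - 3 * s r ^ 2

/-- `a_r⁰(s) = ((s_{r+1}-s_{r+2})² - s_r²)/(2 s_r)`, indices mod 3. -/
noncomputable def a0 (s : Fin 3 → ℝ) (r : Fin 3) : ℝ :=
  ((s (r + 1) - s (r + 2)) ^ 2 - s r ^ 2) / (2 * s r)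

/-- First block of the modified curvature operator of `(W⁶, g_s)`. -/
noncomputable def M6 (s a : Fin 3 → ℝ) : Matrix (Fin 3) (Fin 3) ℝ :=
  !![4 * s 0,                         -Spoly s / (2 * s 2) + a 2,  -Spoly s / (2 * s 1) + a 1;
     -Spoly s / (2 * s 2) + a 2,      4 * s 1,                     -Spoly s / (2 * s 0) + a 0;
     -Spoly s / (2 * s 1) + a 1,      -Spoly s / (2 * s 0) + a 0,  4 * s 2]

/-! For the normal homogeneous metric the off-diagonal entries of `M₆` are `a_r - 3t/2 < -2t = -d/2`,
with `d = 4t` the diagonal; then `2xyz < -d³/4` and `d(x² + y² + z²) > 3d³/4`, so the determinant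
`d³ + 2xyz - d(x² + y² + z²)` is negative. -/

theorem Matrix.det_fin_three_symm_neg_of_lt_neg_half {d x y z : ℝ} (hd : 0 < d)
    (hx : x < -d / 2) (hy : y < -d / 2) (hz : z < -d / 2) :
    (!![d, z, y; z, d, x; y, x, d] : Matrix (Fin 3) (Fin 3) ℝ).det < 0 := by
  have hxy : d ^ 2 / 4 < x * y := by nlinarith
  have hxyz : 2 * x * y * z < -d ^ 3 / 4 := by nlinarith
  have hsq : 3 * d ^ 2 / 4 < x ^ 2 + y ^ 2 + z ^ 2 := by nlinarith
  rw [Matrix.det_fin_three]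
  simp only [Matrix.of_apply, Matrix.cons_val', Matrix.cons_val_zero, Matrix.cons_val_one,
    Matrix.cons_val_two, Matrix.head_cons, Matrix.tail_cons, Matrix.empty_val',
    Matrix.cons_val_fin_one, Matrix.head_fin_const]
  nlinarith

theorem Spoly_const (t : ℝ) : Spoly (fun _ => t) = 3 * t ^ 2 := by
  simp only [Spoly]
  ring

theorem a0_const {t : ℝ} (ht : t ≠ 0) (r : Fin 3) : a0 (fun _ => t) r = -t / 2 := by
  simp only [a0]
  field_simp
  ring

theorem M6_const {t : ℝ} (ht : t ≠ 0) (a : Fin 3 → ℝ) :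
    M6 (fun _ => t) a = !![4 * t, a 2 - 3 * t / 2, a 1 - 3 * t / 2;
      a 2 - 3 * t / 2, 4 * t, a 0 - 3 * t / 2;
      a 1 - 3 * t / 2, a 0 - 3 * t / 2, 4 * t] := by
  have hS : -Spoly (fun _ => t) / (2 * t) = -(3 * t / 2) := by
    rw [Spoly_const]
    field_simp
  simp only [M6, hS, neg_add_eq_sub]

/-- For the normal homogeneous metric `s = (t,t,t)` on `W⁶` (with `a_r⁰(s) = -t/2`),
every `a` with `a_r < -t/2` for all `r` gives `det M₆(s,a) < 0`; in particular no such
`a` makes `M₆(s,a)` positive definite. -/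
theorem normal_metric_W6_not_stronglyPos (t : ℝ) (ht : 0 < t) :
    (∀ r : Fin 3, a0 (fun _ => t) r = -t / 2) ∧
    (∀ a : Fin 3 → ℝ, (∀ r, a r < -t / 2) → (M6 (fun _ => t) a).det < 0) ∧
    ¬ ∃ a : Fin 3 → ℝ, (∀ r, a r < a0 (fun _ => t) r) ∧ (M6 (fun _ => t) a).PosDef := by
  have ha0 : ∀ r : Fin 3, a0 (fun _ => t) r = -t / 2 := a0_const ht.ne'
  have hdet : ∀ a : Fin 3 → ℝ, (∀ r, a r < -t / 2) → (M6 (fun _ => t) a).det < 0 := by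
    intro a ha
    rw [M6_const ht.ne']
    exact Matrix.det_fin_three_symm_neg_of_lt_neg_half (by positivity)
      (by linarith [ha 0]) (by linarith [ha 1]) (by linarith [ha 2])
  refine ⟨ha0, hdet, ?_⟩
  rintro ⟨a, ha, hpos⟩
  have hneg := hdet a fun r => ha0 r ▸ ha r
  exact hneg.not_gt hpos.det_pos
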